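/- arXiv:0710.3873 — 2 statements merged into one kernel-verified Lean document; each statement's English description precedes it below -/
import Mathlib

section
/- Let A be a metabelian Lie algebra and x, y nonzero elements of A. Then x and y form a pair of zero divisors if and only if xy = 0 and (a∘x)∘y = 0 for all a ∈ A. -/
/-- The (two-sided Lie) ideal of `A` generated by the single element `x`. -/
def lieIdealGen (k : Type*) [CommRing k] {A : Type*} [LieRing A] [LieAlgebra k A] (x : A) :
    LieIdeal k A :=
  LieSubmodule.lieSpan k A {x}

/-- Nonzero `x` and `y` form a pair of zero divisors: `⟨x⟩ ∘ ⟨y⟩ = 0`. -/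
def IsZeroDivPair (k : Type*) [CommRing k] {A : Type*} [LieRing A] [LieAlgebra k A]
    (x y : A) : Prop :=
  x ≠ 0 ∧ y ≠ 0 ∧ ∀ a ∈ lieIdealGen k x, ∀ b ∈ lieIdealGen k y, ⁅a, b⁆ = 0

/-- `x` is a zero divisor. -/
def IsLieZeroDivisor (k : Type*) [CommRing k] {A : Type*} [LieRing A] [LieAlgebra k A]
    (x : A) : Prop :=
  ∃ y, IsZeroDivPair k x y

/-- `D(A)`: all zero divisors of `A` together with `0`. -/
def DSet (k : Type*) [CommRing k] (A : Type*) [LieRing A] [LieAlgebra k A] : Set A :=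
  {x | x = 0 ∨ IsLieZeroDivisor k x}

/-- The Fitting radical: elements whose generated ideal is a nilpotent Lie algebra. -/
def FitSet (k : Type*) [CommRing k] (A : Type*) [LieRing A] [LieAlgebra k A] : Set A :=
  {x | LieRing.IsNilpotent (lieIdealGen k x)}

/-- The commutant (derived ideal) `A²`. -/
def commutant (k : Type*) [CommRing k] (A : Type*) [LieRing A] [LieAlgebra k A] : LieIdeal k A :=
  ⁅(⊤ : LieIdeal k A), (⊤ : LieIdeal k A)⁆

/-- A Lie ring is metabelian if `(a∘b)∘(c∘d) = 0` identically. -/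
def IsMetabelianLie (A : Type*) [LieRing A] : Prop :=
  ∀ a b c d : A, ⁅⁅a, b⁆, ⁅c, d⁆⁆ = 0

/-- The commutant `A²` is linear-torsion free: nonzero `x ∈ A²` times `y ∉ A²` is nonzero. -/
def LTFree (k : Type*) [CommRing k] (A : Type*) [LieRing A] [LieAlgebra k A] : Prop :=
  ∀ x ∈ commutant k A, x ≠ 0 → ∀ y ∉ commutant k A, ⁅x, y⁆ ≠ 0

/-!
Both conditions say that `x` commutes with the whole ideal `⟨y⟩`: this is the zero divisor
condition because the centralizer of an ideal is an ideal. In a metabelian algebra the vectors `v`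
with `⁅x, v⁆ = 0` and `⁅⁅a, x⁆, v⁆ = 0` for all `a` already form an ideal, the largest one
centralized by `x`, so `⟨y⟩` lies in it as soon as `y` does.
-/

section

variable {k A : Type*} [CommRing k] [LieRing A] [LieAlgebra k A]

theorem mem_lieIdealGen_self (x : A) : x ∈ lieIdealGen k x :=
  LieSubmodule.subset_lieSpan rfl

theorem lieIdealGen_le_iff {x : A} {I : LieIdeal k A} : lieIdealGen k x ≤ I ↔ x ∈ I :=
  LieSubmodule.lieSpan_le.trans Set.singleton_subset_iff

theorem forall_mem_lieIdealGen_lie_eq_zero_iff {x : A} {I : LieIdeal k A} :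
    (∀ a ∈ lieIdealGen k x, ∀ b ∈ I, ⁅a, b⁆ = 0) ↔ ∀ b ∈ I, ⁅x, b⁆ = 0 := by
  refine ⟨fun h => h x (mem_lieIdealGen_self x), fun h a ha => ?_⟩
  -- `LieModule.ker k A I` is the centralizer of `I`.
  have hx : x ∈ LieModule.ker k A I := (LieModule.mem_ker _ _ _ x).2 fun b => Subtype.ext (h b b.2)
  intro b hb
  exact congrArg Subtype.val ((LieModule.mem_ker _ _ _ a).1 (lieIdealGen_le_iff.2 hx ha) ⟨b, hb⟩)

theorem isZeroDivPair_iff_forall_mem_lieIdealGen {x y : A} (hx : x ≠ 0) (hy : y ≠ 0) :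
    IsZeroDivPair k x y ↔ ∀ v ∈ lieIdealGen k y, ⁅x, v⁆ = 0 := by
  simp only [IsZeroDivPair, hx, hy, ne_eq, not_false_eq_true, true_and]
  exact forall_mem_lieIdealGen_lie_eq_zero_iff

namespace IsMetabelianLie

/-- The largest ideal of `A` centralized by `x`. Closure under brackets is where metabelianity
enters: `⁅a, x⁆` commutes with every `⁅b, v⁆`. -/
def centralizingIdeal (hA : IsMetabelianLie A) (x : A) : LieIdeal k A where
  carrier := {v | ⁅x, v⁆ = 0 ∧ ∀ a : A, ⁅⁅a, x⁆, v⁆ = 0}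
  add_mem' := by
    rintro u v ⟨hu, hu'⟩ ⟨hv, hv'⟩
    exact ⟨by rw [lie_add, hu, hv, add_zero], fun a => by rw [lie_add, hu' a, hv' a, add_zero]⟩
  zero_mem' := ⟨lie_zero x, fun a => lie_zero _⟩
  smul_mem' := by
    rintro c v ⟨hv, hv'⟩
    exact ⟨by rw [lie_smul, hv, smul_zero], fun a => by rw [lie_smul, hv' a, smul_zero]⟩
  lie_mem := by
    rintro b v ⟨hv, hv'⟩
    refine ⟨?_, fun a => hA a x b v⟩
    rw [leibniz_lie, hv, lie_zero, add_zero, ← lie_skew x b, neg_lie, hv' b, neg_zero]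

variable (hA : IsMetabelianLie A)

@[simp]
theorem mem_centralizingIdeal {x v : A} :
    v ∈ centralizingIdeal (k := k) hA x ↔ ⁅x, v⁆ = 0 ∧ ∀ a : A, ⁅⁅a, x⁆, v⁆ = 0 :=
  Iff.rfl

theorem le_centralizingIdeal_iff {x : A} {I : LieIdeal k A} :
    I ≤ centralizingIdeal hA x ↔ ∀ v ∈ I, ⁅x, v⁆ = 0 := by
  refine ⟨fun h v hv => (h hv).1, fun h v hv => ⟨h v hv, fun a => ?_⟩⟩
  rw [lie_lie, h v hv, h _ (I.lie_mem hv), lie_zero, sub_zero]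

end IsMetabelianLie

end

/-- in a metabelian Lie algebra, nonzero x, y form a pair of zero divisors
iff xy = 0 and (a x) y = 0 for all a. -/
theorem isZeroDivPair_iff (k : Type*) [Field k] {A : Type*} [LieRing A] [LieAlgebra k A]
    (hA : IsMetabelianLie A) {x y : A} (hx : x ≠ 0) (hy : y ≠ 0) :
    IsZeroDivPair k x y ↔ (⁅x, y⁆ = 0 ∧ ∀ a : A, ⁅⁅a, x⁆, y⁆ = 0) := by
  rw [isZeroDivPair_iff_forall_mem_lieIdealGen hx hy, ← hA.le_centralizingIdeal_iff,
    lieIdealGen_le_iff, hA.mem_centralizingIdeal]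
end

section
/- Let A be a metabelian Lie algebra whose commutant A² is linear-torsion free, X a basis of A/A², Y a nonempty set disjoint from X, and M₁ = A² ⊗_{k[X]} k[X ∪ Y]. Then M₁ is linear-torsion free as a k[X ∪ Y]-module: for every nonzero u ∈ M₁ and every nonzero linear polynomial f = Σ αᵢxᵢ + Σ βⱼyⱼ, one has u·f ≠ 0. -/
/-- A polynomial is a nonzero linear form. -/
def IsLinearPoly {k : Type*} [CommSemiring k] {σ : Type*} (f : MvPolynomial σ k) : Prop :=
  ∃ c : σ →₀ k, c ≠ 0 ∧ f = c.sum fun i a => MvPolynomial.C a * MvPolynomial.X i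

/-- k[X] embeds in k[X ∪ Y]. -/
noncomputable instance renameInlAlgebra (k : Type*) [CommSemiring k] (ι κ : Type*) :
    Algebra (MvPolynomial ι k) (MvPolynomial (ι ⊕ κ) k) :=
  (MvPolynomial.rename (Sum.inl : ι → ι ⊕ κ)).toRingHom.toAlgebra

/-!
Write `k[X ∪ Y] = k[X][Y]`, so that an element `u` of `M₁` is a finitely supported family of
coefficients in `A²` indexed by the monomials in `Y`. If the linear form `f` involves no `y`, it
acts coefficientwise as a linear form of `k[X]`, and linear-torsion freeness of `A²` applies to a
nonzero coefficient of `u`. Otherwise choose `y₀` with coefficient `β ≠ 0` in `f` and a monomial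
`m` of `u` of maximal degree in `y₀`: no other term of `f` raises the `y₀`-degree, so the
coefficient of `f • u` at `m y₀` is `β` times the coefficient of `u` at `m`, which is nonzero.
-/

open TensorProduct

namespace MvPolynomial

def IsLinearTorsionFree (k σ N : Type*) [CommSemiring k] [AddCommMonoid N]
    [Module (MvPolynomial σ k) N] : Prop :=
  ∀ n : N, n ≠ 0 → ∀ f : MvPolynomial σ k, IsLinearPoly f → f • n ≠ 0

section

variable {k : Type*} [CommSemiring k] {ι κ : Type*}

noncomputable def sumInrAlgEquiv :
    MvPolynomial (ι ⊕ κ) k ≃ₐ[MvPolynomial ι k] MvPolynomial κ (MvPolynomial ι k) :=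
  AlgEquiv.ofRingEquiv
    (f := ((renameEquiv k (Equiv.sumComm ι κ)).trans (sumAlgEquiv k κ ι)).toRingEquiv)
    fun g => by
      change sumAlgEquiv k κ ι (rename (Equiv.sumComm ι κ) (rename Sum.inl g)) = C g
      rw [rename_rename]
      exact DFunLike.congr_fun (sumAlgEquiv_comp_rename_inr k κ ι) g

@[simp]
lemma sumInrAlgEquiv_X_inr (j : κ) :
    sumInrAlgEquiv (X (Sum.inr j) : MvPolynomial (ι ⊕ κ) k) = X j := by
  simp [sumInrAlgEquiv]

lemma exists_isLinearPoly_rename_inl_eq {c : ι ⊕ κ →₀ k} (hc : c ≠ 0)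
    (hinr : ∀ j, c (Sum.inr j) = 0) :
    ∃ g : MvPolynomial ι k, IsLinearPoly g ∧ rename Sum.inl g = c.sum fun s a => C a * X s := by
  have hsupp : (c.support : Set (ι ⊕ κ)) ⊆ Set.range Sum.inl := by
    rintro (i | j) hj
    · exact ⟨i, rfl⟩
    · exact absurd (hinr j) (Finsupp.mem_support_iff.1 hj)
  have hc_eq := Finsupp.mapDomain_comapDomain _ Sum.inl_injective c hsupp
  set c' := c.comapDomain Sum.inl Sum.inl_injective.injOn
  refine ⟨c'.sum fun i a => C a * X i, ⟨c', fun h => hc ?_, rfl⟩, ?_⟩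
  · rw [← hc_eq, h, Finsupp.mapDomain_zero]
  · conv_rhs => rw [← hc_eq]
    rw [Finsupp.sum_mapDomain_index (by simp) (by simp [add_mul]), map_finsuppSum]
    simp only [map_mul, rename_C, rename_X]

variable {N : Type*} [AddCommMonoid N] [Module (MvPolynomial ι k) N]

variable (N) in
open scoped Classical in
noncomputable def sumTensorCoeffEquiv :
    MvPolynomial (ι ⊕ κ) k ⊗[MvPolynomial ι k] N ≃ₗ[MvPolynomial ι k] ((κ →₀ ℕ) →₀ N) :=
  TensorProduct.congr (sumInrAlgEquiv.toLinearEquiv ≪≫ₗ (basisMonomials κ _).repr)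
    (LinearEquiv.refl _ N) ≪≫ₗ finsuppScalarLeft _ N _

lemma sumTensorCoeffEquiv_tmul_apply (p : MvPolynomial (ι ⊕ κ) k) (n : N) (m : κ →₀ ℕ) :
    sumTensorCoeffEquiv N (p ⊗ₜ n) m = coeff m (sumInrAlgEquiv p) • n := by
  simp only [sumTensorCoeffEquiv, LinearEquiv.trans_apply, congr_tmul, LinearEquiv.refl_apply,
    finsuppScalarLeft_apply_tmul_apply]
  rfl

lemma sumTensorCoeffEquiv_rename_inl_smul (g : MvPolynomial ι k)
    (u : MvPolynomial (ι ⊕ κ) k ⊗[MvPolynomial ι k] N) :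
    sumTensorCoeffEquiv N ((rename Sum.inl g : MvPolynomial (ι ⊕ κ) k) • u) =
      g • sumTensorCoeffEquiv N u := by
  rw [← map_smul]
  exact congrArg _ (algebraMap_smul (MvPolynomial (ι ⊕ κ) k) g u)

lemma sumTensorCoeffEquiv_X_inr_smul_apply [DecidableEq κ] (j : κ)
    (u : MvPolynomial (ι ⊕ κ) k ⊗[MvPolynomial ι k] N) (m : κ →₀ ℕ) :
    sumTensorCoeffEquiv N ((X (Sum.inr j) : MvPolynomial (ι ⊕ κ) k) • u) m =
      if j ∈ m.support then sumTensorCoeffEquiv N u (m - Finsupp.single j 1) else 0 := by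
  induction u using TensorProduct.induction_on with
  | zero => simp
  | tmul p n =>
    rw [smul_tmul', smul_eq_mul, sumTensorCoeffEquiv_tmul_apply, sumTensorCoeffEquiv_tmul_apply,
      map_mul, sumInrAlgEquiv_X_inr, coeff_X_mul', ite_smul, zero_smul]
  | add u v hu hv => simp only [smul_add, map_add, Finsupp.add_apply, hu, hv]; split_ifs <;> simp

lemma sumTensorCoeffEquiv_C_smul (a : k) (u : MvPolynomial (ι ⊕ κ) k ⊗[MvPolynomial ι k] N) :
    sumTensorCoeffEquiv N ((C a : MvPolynomial (ι ⊕ κ) k) • u) =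
      (C a : MvPolynomial ι k) • sumTensorCoeffEquiv N u := by
  simpa using sumTensorCoeffEquiv_rename_inl_smul (C a) u

lemma rename_inl_smul_ne_zero (hN : IsLinearTorsionFree k ι N) {g : MvPolynomial ι k}
    (hg : IsLinearPoly g) {u : MvPolynomial (ι ⊕ κ) k ⊗[MvPolynomial ι k] N} (hu : u ≠ 0) :
    (rename Sum.inl g : MvPolynomial (ι ⊕ κ) k) • u ≠ 0 := by
  obtain ⟨m, hm⟩ :=
    DFunLike.ne_iff.1 ((LinearEquiv.map_ne_zero_iff (sumTensorCoeffEquiv N)).2 hu)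
  intro h
  apply hN _ hm g hg
  simpa [sumTensorCoeffEquiv_rename_inl_smul] using congr(sumTensorCoeffEquiv N $h m)

lemma linearForm_smul_ne_zero_of_isUnit_inr {c : ι ⊕ κ →₀ k} {j₀ : κ}
    (hj₀ : IsUnit (c (Sum.inr j₀))) {u : MvPolynomial (ι ⊕ κ) k ⊗[MvPolynomial ι k] N}
    (hu : u ≠ 0) : (c.sum fun s a => C a * X s : MvPolynomial (ι ⊕ κ) k) • u ≠ 0 := by
  classical
  set F := sumTensorCoeffEquiv N u
  have hF : F.support.Nonempty :=
    Finsupp.support_nonempty_iff.2 ((LinearEquiv.map_ne_zero_iff _).2 hu)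
  obtain ⟨m₀, hm₀, hmax⟩ := F.support.exists_mem_eq_sup hF (· j₀)
  have hvanish : ∀ m, m₀ j₀ < m j₀ → F m = 0 := fun m hm =>
    Finsupp.notMem_support_iff.1 fun h =>
      (hmax ▸ Finset.le_sup (f := fun m : κ →₀ ℕ => m j₀) h).not_gt hm
  set n := m₀ + Finsupp.single j₀ 1
  have hlead :
      sumTensorCoeffEquiv N ((X (Sum.inr j₀) : MvPolynomial (ι ⊕ κ) k) • u) n = F m₀ := by
    rw [sumTensorCoeffEquiv_X_inr_smul_apply, if_pos (by simp [n]), add_tsub_cancel_right]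
  have hrest : ∀ s, s ≠ Sum.inr j₀ →
      sumTensorCoeffEquiv N ((X s : MvPolynomial (ι ⊕ κ) k) • u) n = 0 := by
    rintro (i | j) hs
    · rw [← rename_X Sum.inl, sumTensorCoeffEquiv_rename_inl_smul, Finsupp.smul_apply,
        hvanish n (by simp [n]), smul_zero]
    · have hj : j ≠ j₀ := fun h => hs (h ▸ rfl)
      rw [sumTensorCoeffEquiv_X_inr_smul_apply]
      split_ifs
      · exact hvanish _ (by simp [n, hj])
      · rfl
  intro h
  have hcoeff := congr(sumTensorCoeffEquiv N $h n)
  rw [Finsupp.sum, Finset.sum_smul, map_sum, Finsupp.finsetSum_apply,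
    Finset.sum_eq_single (Sum.inr j₀)] at hcoeff
  · rw [mul_smul, sumTensorCoeffEquiv_C_smul, Finsupp.smul_apply, hlead, map_zero,
      Finsupp.zero_apply, (hj₀.map C).smul_eq_zero] at hcoeff
    exact Finsupp.mem_support_iff.1 hm₀ hcoeff
  · intro s _ hs
    rw [mul_smul, sumTensorCoeffEquiv_C_smul, Finsupp.smul_apply, hrest s hs, smul_zero]
  · intro hs
    rw [Finsupp.notMem_support_iff.1 hs, C_0, zero_mul, zero_smul, map_zero, Finsupp.zero_apply]

end

theorem IsLinearTorsionFree.baseChange {k ι κ N : Type*} [Field k] [AddCommMonoid N]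
    [Module (MvPolynomial ι k) N] (hN : IsLinearTorsionFree k ι N) :
    IsLinearTorsionFree k (ι ⊕ κ) (MvPolynomial (ι ⊕ κ) k ⊗[MvPolynomial ι k] N) := by
  rintro u hu f ⟨c, hc, rfl⟩
  by_cases hinr : ∃ j, c (Sum.inr j) ≠ 0
  · obtain ⟨j, hj⟩ := hinr
    exact linearForm_smul_ne_zero_of_isUnit_inr hj.isUnit hu
  · push Not at hinr
    obtain ⟨g, hg, hfg⟩ := exists_isLinearPoly_rename_inl_eq hc hinr
    exact hfg ▸ rename_inl_smul_ne_zero hN hg hu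

end MvPolynomial

theorem baseChange_ltfree_general (k : Type*) [Field k] {A : Type*} [LieRing A] [LieAlgebra k A]
    {ι κ : Type*}
    [Module (MvPolynomial ι k) ↥(commutant k A)]
    (hltf : ∀ m : ↥(commutant k A), m ≠ 0 →
      ∀ f : MvPolynomial ι k, IsLinearPoly f → f • m ≠ 0) :
    ∀ u : TensorProduct (MvPolynomial ι k) (MvPolynomial (ι ⊕ κ) k) ↥(commutant k A),
      u ≠ 0 → ∀ f : MvPolynomial (ι ⊕ κ) k, IsLinearPoly f → f • u ≠ 0 :=
  MvPolynomial.IsLinearTorsionFree.baseChange hltf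

/-- if the commutant A² of a metabelian Lie algebra A is linear-torsion
free as a module over k[X] (X a basis of A/A², variables acting by bracketing with
preimages), and Y is a nonempty set of fresh variables, then the base change
M₁ = A² ⊗_{k[X]} k[X ∪ Y] is linear-torsion free over k[X ∪ Y]. -/
theorem baseChange_ltfree (k : Type*) [Field k] {A : Type*} [LieRing A] [LieAlgebra k A]
    (hmet : IsMetabelianLie A)
    {ι κ : Type*} [Nonempty κ]
    (b : Module.Basis ι k (A ⧸ commutant k A)) (σ : ι → A)
    (hσ : ∀ i, LieSubmodule.Quotient.mk' (commutant k A) (σ i) = b i)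
    [Module (MvPolynomial ι k) ↥(commutant k A)]
    (hscal : ∀ (c : k) (m : ↥(commutant k A)),
      (MvPolynomial.C c : MvPolynomial ι k) • m = c • m)
    (hX : ∀ (i : ι) (m : ↥(commutant k A)),
      (((MvPolynomial.X i : MvPolynomial ι k) • m : ↥(commutant k A)) : A) = ⁅(m : A), σ i⁆)
    (hltf : ∀ m : ↥(commutant k A), m ≠ 0 →
      ∀ f : MvPolynomial ι k, IsLinearPoly f → f • m ≠ 0) :
    ∀ u : TensorProduct (MvPolynomial ι k) (MvPolynomial (ι ⊕ κ) k) ↥(commutant k A),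
      u ≠ 0 → ∀ f : MvPolynomial (ι ⊕ κ) k, IsLinearPoly f → f • u ≠ 0 :=
  baseChange_ltfree_general k hltf
end
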